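/- Any alternating sign matrix that classically avoids both the patterns 2143 and 3412 contains at most 3 entries equal to −1. -/

import Mathlib

def IsASM {n : ℕ} (A : Matrix (Fin n) (Fin n) ℤ) : Prop :=
  (∀ i j, A i j = -1 ∨ A i j = 0 ∨ A i j = 1) ∧
  (∀ i, ∑ j, A i j = 1) ∧
  (∀ j, ∑ i, A i j = 1) ∧
  (∀ i j, ∑ l ∈ Finset.Iic j, A i l = 0 ∨ ∑ l ∈ Finset.Iic j, A i l = 1) ∧
  (∀ i j, ∑ l ∈ Finset.Iic i, A l j = 0 ∨ ∑ l ∈ Finset.Iic i, A l j = 1)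

def ASMContains {n m : ℕ} (A : Matrix (Fin n) (Fin n) ℤ) (σ : Equiv.Perm (Fin m)) : Prop :=
  ∃ f g : Fin m ↪o Fin n, ∀ a, A (f a) (g (σ a)) = 1

def ASMAvoids {n m : ℕ} (A : Matrix (Fin n) (Fin n) ℤ) (σ : Equiv.Perm (Fin m)) : Prop :=
  ¬ ASMContains A σ
def p2143 : Equiv.Perm (Fin 4) := ⟨![1,0,3,2], ![1,0,3,2], by decide, by decide⟩
def p3412 : Equiv.Perm (Fin 4) := ⟨![2,3,0,1], ![2,3,0,1], by decide, by decide⟩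

open Matrix

variable {n : ℕ} {A : Matrix (Fin n) (Fin n) ℤ}

lemma isasm_transpose (hA : IsASM A) : IsASM Aᵀ := by
  obtain ⟨h1, h2, h3, h4, h5⟩ := hA
  refine ⟨fun i j => h1 j i, h3, h2, fun i j => ?_, fun i j => ?_⟩
  · simpa [Matrix.transpose_apply] using h5 j i
  · simpa [Matrix.transpose_apply] using h4 j i

lemma row_sums (hA : IsASM A) {i j : Fin n} (h : A i j = -1) :
    ∑ l ∈ Finset.Iio j, A i l = 1 ∧ ∑ l ∈ Finset.Iic j, A i l = 0 := by
  have hsplit : ∑ l ∈ Finset.Iic j, A i l = A i j + ∑ l ∈ Finset.Iio j, A i l := by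
    rw [← Finset.Iio_insert, Finset.sum_insert (by simp)]
  have hP := hA.2.2.2.1 i j
  have hQ : ∑ l ∈ Finset.Iio j, A i l = 0 ∨ ∑ l ∈ Finset.Iio j, A i l = 1 := by
    rcases Nat.eq_zero_or_pos j.val with h0 | hpos
    · left
      have he : Finset.Iio j = ∅ := by
        ext l
        simp only [Finset.mem_Iio, Finset.notMem_empty, iff_false, Fin.lt_def, h0]
        omega
      rw [he, Finset.sum_empty]
    · have hlt : j.val - 1 < n := by omega
      have heq : Finset.Iio j = Finset.Iic (⟨j.val - 1, hlt⟩ : Fin n) := by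
        ext l
        simp only [Finset.mem_Iio, Finset.mem_Iic, Fin.lt_def, Fin.le_def]
        omega
      rw [heq]; exact hA.2.2.2.1 i _
  rw [h] at hsplit
  omega

lemma exists_left (hA : IsASM A) {i j : Fin n} (h : A i j = -1) :
    ∃ j' < j, A i j' = 1 := by
  have hQ := (row_sums hA h).1
  by_contra hc
  push_neg at hc
  have : ∑ l ∈ Finset.Iio j, A i l ≤ 0 := by
    apply Finset.sum_nonpos
    intro l hl
    rw [Finset.mem_Iio] at hl
    rcases hA.1 i l with h' | h' | h'
    · omega
    · omega
    · exact absurd h' (hc l hl)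
  omega

lemma exists_right (hA : IsASM A) {i j : Fin n} (h : A i j = -1) :
    ∃ j' , j < j' ∧ A i j' = 1 := by
  have hP := (row_sums hA h).2
  have htot := hA.2.1 i
  have hsplit := Finset.sum_add_sum_compl (Finset.Iic j) (A i)
  rw [hP, htot, zero_add] at hsplit
  by_contra hc
  push_neg at hc
  have : ∑ l ∈ (Finset.Iic j)ᶜ, A i l ≤ 0 := by
    apply Finset.sum_nonpos
    intro l hl
    rw [Finset.mem_compl, Finset.mem_Iic] at hl
    have hlt : j < l := lt_of_not_ge hl
    rcases hA.1 i l with h' | h' | h'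
    · omega
    · omega
    · exact absurd h' (hc l hlt)
  omega

lemma exists_up (hA : IsASM A) {i j : Fin n} (h : A i j = -1) :
    ∃ i' < i, A i' j = 1 := by
  have := exists_left (isasm_transpose hA) (by simpa using h : Aᵀ j i = -1)
  simpa using this

lemma exists_down (hA : IsASM A) {i j : Fin n} (h : A i j = -1) :
    ∃ i', i < i' ∧ A i' j = 1 := by
  have := exists_right (isasm_transpose hA) (by simpa using h : Aᵀ j i = -1)
  simpa using this

def emb4 {n : ℕ} (a b c d : Fin n) (h1 : a < b) (h2 : b < c) (h3 : c < d) :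
    Fin 4 ↪o Fin n :=
  OrderEmbedding.ofStrictMono ![a, b, c, d] (by
    intro i j hij
    fin_cases i <;> fin_cases j <;>
      simp_all [Matrix.cons_val_zero, Matrix.cons_val_one] <;>
      omega)

lemma contains2143 {n : ℕ} {A : Matrix (Fin n) (Fin n) ℤ} {r1 r2 r3 r4 c1 c2 c3 c4 : Fin n}
    (hr1 : r1 < r2) (hr2 : r2 < r3) (hr3 : r3 < r4)
    (hc1 : c1 < c2) (hc2 : c2 < c3) (hc3 : c3 < c4)
    (e1 : A r1 c2 = 1) (e2 : A r2 c1 = 1) (e3 : A r3 c4 = 1) (e4 : A r4 c3 = 1) :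
    ASMContains A p2143 := by
  refine ⟨emb4 r1 r2 r3 r4 hr1 hr2 hr3, emb4 c1 c2 c3 c4 hc1 hc2 hc3, fun a => ?_⟩
  fin_cases a <;>
    simp [p2143, emb4, OrderEmbedding.ofStrictMono, e1, e2, e3, e4]

lemma contains3412 {n : ℕ} {A : Matrix (Fin n) (Fin n) ℤ} {r1 r2 r3 r4 c1 c2 c3 c4 : Fin n}
    (hr1 : r1 < r2) (hr2 : r2 < r3) (hr3 : r3 < r4)
    (hc1 : c1 < c2) (hc2 : c2 < c3) (hc3 : c3 < c4)
    (e1 : A r1 c3 = 1) (e2 : A r2 c4 = 1) (e3 : A r3 c1 = 1) (e4 : A r4 c2 = 1) :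
    ASMContains A p3412 := by
  refine ⟨emb4 r1 r2 r3 r4 hr1 hr2 hr3, emb4 c1 c2 c3 c4 hc1 hc2 hc3, fun a => ?_⟩
  fin_cases a <;>
    simp [p3412, emb4, OrderEmbedding.ofStrictMono, e1, e2, e3, e4]

lemma two_neg_SE {i i' j j' : Fin n} (hA : IsASM A)
    (hp : A i j = -1) (hq : A i' j' = -1) (hi : i < i') (hj : j < j') :
    ASMContains A p2143 := by
  obtain ⟨a1, ha1, ea1⟩ := exists_up hA hp
  obtain ⟨b1, hb1, eb1⟩ := exists_left hA hp
  obtain ⟨b2, hb2, eb2⟩ := exists_right hA hq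
  obtain ⟨a2, ha2, ea2⟩ := exists_down hA hq
  exact contains2143 ha1 hi ha2 hb1 hj hb2 ea1 eb1 eb2 ea2

lemma two_neg_SW {i i' j j' : Fin n} (hA : IsASM A)
    (hp : A i j = -1) (hq : A i' j' = -1) (hi : i < i') (hj : j' < j) :
    ASMContains A p3412 := by
  obtain ⟨a1, ha1, ea1⟩ := exists_up hA hp
  obtain ⟨b2, hb2, eb2⟩ := exists_right hA hp
  obtain ⟨b1, hb1, eb1⟩ := exists_left hA hq
  obtain ⟨a2, ha2, ea2⟩ := exists_down hA hq
  exact contains3412 ha1 hi ha2 hb1 hj hb2 ea1 eb2 eb1 ea2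

lemma avoids_transpose {m : ℕ} {σ : Equiv.Perm (Fin m)} (hσ : σ⁻¹ = σ)
    (hav : ASMAvoids A σ) : ASMAvoids Aᵀ σ := by
  rintro ⟨f, g, hfg⟩
  refine hav ⟨g, f, fun a => ?_⟩
  have := hfg (σ a)
  have hσσ : σ (σ a) = a := by
    nth_rewrite 1 [← hσ]
    exact Equiv.symm_apply_apply σ a
  rw [hσσ] at this
  simpa using this

lemma p2143_inv : p2143⁻¹ = p2143 := by decide

lemma p3412_inv : p3412⁻¹ = p3412 := by decide

lemma row4 (hA : IsASM A) {i c1 c2 c3 c4 : Fin n}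
    (h12 : c1 < c2) (h23 : c2 < c3) (h34 : c3 < c4)
    (e1 : A i c1 = -1) (e2 : A i c2 = -1) (e3 : A i c3 = -1) (e4 : A i c4 = -1)
    (hrow : ∀ p q, A p q = -1 → p = i)
    (hav2143 : ASMAvoids A p2143) (hav3412 : ASMAvoids A p3412) : False := by
  obtain ⟨s2, hs2, es2⟩ := exists_down hA e2
  obtain ⟨s3, hs3, es3⟩ := exists_down hA e3
  have hne : ¬ s3 < s2 := by
    intro h
    obtain ⟨a1, ha1, ea1⟩ := exists_up hA e1
    obtain ⟨b1, hb1, eb1⟩ := exists_left hA e1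
    exact hav2143 (contains2143 ha1 hs3 h hb1 h12 h23 ea1 eb1 es3 es2)
  have hne' : ¬ s2 < s3 := by
    intro h
    obtain ⟨a4, ha4, ea4⟩ := exists_up hA e4
    obtain ⟨b4, hb4, eb4⟩ := exists_right hA e4
    exact hav3412 (contains3412 ha4 hs2 h h23 h34 hb4 ea4 eb4 es2 es3)
  have hss : s2 = s3 := le_antisymm (not_lt.1 hne) (not_lt.1 hne')
  subst hss
  -- row s2 now has two 1's and no -1, contradicting row sum 1
  have hnonneg : ∀ l, 0 ≤ A s2 l := by
    intro l
    rcases hA.1 s2 l with h' | h' | h'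
    · exact absurd (hrow s2 l h') (by exact ne_of_gt hs2)
    · omega
    · omega
  have h2le : (2 : ℤ) ≤ ∑ l, A s2 l := by
    have : ∑ l ∈ ({c2, c3} : Finset (Fin n)), A s2 l = 2 := by
      rw [Finset.sum_pair (ne_of_lt h23), es2, es3]
      norm_num
    calc (2 : ℤ) = ∑ l ∈ ({c2, c3} : Finset (Fin n)), A s2 l := this.symm
      _ ≤ ∑ l, A s2 l :=
        Finset.sum_le_sum_of_subset_of_nonneg (Finset.subset_univ _)
          (fun l _ _ => hnonneg l)
  rw [hA.2.1 s2] at h2le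
  omega

lemma exists_chain4 {T : Finset (Fin n)} (h : 4 ≤ T.card) :
    ∃ c1 c2 c3 c4 : Fin n, c1 < c2 ∧ c2 < c3 ∧ c3 < c4 ∧
      c1 ∈ T ∧ c2 ∈ T ∧ c3 ∈ T ∧ c4 ∈ T := by
  obtain ⟨T', hsub, hT'⟩ := Finset.exists_subset_card_eq h
  let e := T'.orderIsoOfFin hT'
  have hmono : ∀ k l : Fin 4, k < l → (e k : Fin n) < (e l : Fin n) :=
    fun k l hkl => Subtype.coe_lt_coe.2 (e.strictMono hkl)
  exact ⟨e 0, e 1, e 2, e 3,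
    hmono 0 1 (by decide), hmono 1 2 (by decide), hmono 2 3 (by decide),
    hsub (e 0).2, hsub (e 1).2, hsub (e 2).2, hsub (e 3).2⟩

theorem statement9 {n : ℕ} (A : Matrix (Fin n) (Fin n) ℤ) (hA : IsASM A)
    (h2143 : ASMAvoids A p2143) (h3412 : ASMAvoids A p3412) :
    (Finset.univ.filter (fun p : Fin n × Fin n => A p.1 p.2 = -1)).card ≤ 3 := by
  by_contra hcon
  push_neg at hcon
  set S := Finset.univ.filter (fun p : Fin n × Fin n => A p.1 p.2 = -1) with hSdef
  have h4 : 4 ≤ S.card := hcon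
  have hmem : ∀ p : Fin n × Fin n, p ∈ S ↔ A p.1 p.2 = -1 := by
    intro p; simp [hSdef]
  by_cases hshare : ∀ p ∈ S, ∀ q ∈ S, p.1 = q.1 ∨ p.2 = q.2
  · -- all -1's in one row or one column
    have hS0 : S.Nonempty := Finset.card_pos.1 (by omega)
    obtain ⟨p0, hp0⟩ := hS0
    by_cases hrowcase : ∀ q ∈ S, q.1 = p0.1
    · -- all in row p0.1
      have hinj : Set.InjOn Prod.snd (S : Set (Fin n × Fin n)) := by
        intro p hp q hq hpq
        have := (hrowcase p hp).trans (hrowcase q hq).symm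
        exact Prod.ext this hpq
      have hcard : 4 ≤ (S.image Prod.snd).card := by
        rw [Finset.card_image_of_injOn hinj]; exact h4
      obtain ⟨c1, c2, c3, c4, h12, h23, h34, m1, m2, m3, m4⟩ := exists_chain4 hcard
      have hent : ∀ c : Fin n, c ∈ S.image Prod.snd → A p0.1 c = -1 := by
        intro c hc
        obtain ⟨p, hp, rfl⟩ := Finset.mem_image.1 hc
        rw [← hrowcase p hp]
        exact (hmem p).1 hp
      exact row4 hA h12 h23 h34 (hent c1 m1) (hent c2 m2) (hent c3 m3) (hent c4 m4)
        (fun p q h => hrowcase (p, q) ((hmem (p, q)).2 h)) h2143 h3412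
    · -- all in column p0.2
      push_neg at hrowcase
      obtain ⟨p1, hp1, hne⟩ := hrowcase
      have hc12 : p1.2 = p0.2 := (hshare p1 hp1 p0 hp0).resolve_left hne
      have hcol : ∀ q ∈ S, q.2 = p0.2 := by
        intro q hq
        rcases hshare q hq p0 hp0 with h | h
        · rcases hshare q hq p1 hp1 with h' | h'
          · exact absurd (h'.symm.trans h) hne
          · exact h'.trans hc12
        · exact h
      have hinj : Set.InjOn Prod.fst (S : Set (Fin n × Fin n)) := by
        intro p hp q hq hpq
        have := (hcol p hp).trans (hcol q hq).symm
        exact Prod.ext hpq this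
      have hcard : 4 ≤ (S.image Prod.fst).card := by
        rw [Finset.card_image_of_injOn hinj]; exact h4
      obtain ⟨c1, c2, c3, c4, h12, h23, h34, m1, m2, m3, m4⟩ := exists_chain4 hcard
      have hent : ∀ c : Fin n, c ∈ S.image Prod.fst → Aᵀ p0.2 c = -1 := by
        intro c hc
        obtain ⟨p, hp, rfl⟩ := Finset.mem_image.1 hc
        rw [Matrix.transpose_apply, ← hcol p hp]
        exact (hmem p).1 hp
      exact row4 (isasm_transpose hA) h12 h23 h34
        (hent c1 m1) (hent c2 m2) (hent c3 m3) (hent c4 m4)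
        (fun p q h => hcol (q, p) ((hmem (q, p)).2 h))
        (avoids_transpose p2143_inv h2143) (avoids_transpose p3412_inv h3412)
  · push_neg at hshare
    obtain ⟨p, hp, q, hq, hne1, hne2⟩ := hshare
    have hp' := (hmem p).1 hp
    have hq' := (hmem q).1 hq
    rcases lt_or_gt_of_ne hne1 with h1 | h1 <;> rcases lt_or_gt_of_ne hne2 with h2 | h2
    · exact h2143 (two_neg_SE hA hp' hq' h1 h2)
    · exact h3412 (two_neg_SW hA hp' hq' h1 h2)
    · exact h3412 (two_neg_SW hA hq' hp' h1 h2)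
    · exact h2143 (two_neg_SE hA hq' hp' h1 h2)
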